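/- arXiv:2411.15985 — 2 statements merged into one kernel-verified Lean document; each statement's English description precedes it below -/
import Mathlib

section
/- Let N ≥ 1 be an integer. Define, for s ∈ (0, N/2), κ_{N,s} = 2^{−2s} π^{−s} (Γ((N−2s)/2)/Γ((N+2s)/2)) · (Γ(N)/Γ(N/2))^{2s/N}, and define κ_N = (1/(4π)) (Γ(N)/Γ(N/2))^{2/N} e^{−2ψ(N/2)}, where ψ = Γ'/Γ is the digamma function. Then lim_{s→0⁺} κ_{N,s}^{1/s} = κ_N. -/
open MeasureTheory Filter Topology

noncomputable section

/-- Euclidean space `ℝ^N`. -/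
abbrev EucSp (N : ℕ) := EuclideanSpace ℝ (Fin N)

/-- The digamma function `ψ = Γ'/Γ`. -/
def digamma (x : ℝ) : ℝ := deriv Real.Gamma x / Real.Gamma x

/-- The Euler–Mascheroni constant `γ = -Γ'(1)`. -/
def eulerGamma : ℝ := - deriv Real.Gamma 1

/-- The constant `c_N = π^{-N/2} Γ(N/2)`. -/
def cconst (N : ℕ) : ℝ := Real.pi ^ (-(N : ℝ) / 2) * Real.Gamma ((N : ℝ) / 2)

/-- The constant `ρ_N = 2 ln 2 + ψ(N/2) - γ`. -/
def rhoConst (N : ℕ) : ℝ := 2 * Real.log 2 + digamma ((N : ℝ) / 2) - eulerGamma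

/-- The kernel `k(z) = 1_{B_1(0)}(z) |z|^{-N}`. -/
def kKer (N : ℕ) (z : EucSp N) : ℝ := if ‖z‖ < 1 then ‖z‖ ^ (-(N : ℝ)) else 0

/-- The kernel `j(z) = 1_{ℝ^N \ B_1(0)}(z) |z|^{-N}`. -/
def jKer (N : ℕ) (z : EucSp N) : ℝ := if 1 ≤ ‖z‖ then ‖z‖ ^ (-(N : ℝ)) else 0

/-- The bilinear form `𝓔(u,v)`. -/
def bilinE (N : ℕ) (u v : EucSp N → ℝ) : ℝ :=
  (cconst N / 2) *
    ∫ p : EucSp N × EucSp N, (u p.1 - u p.2) * (v p.1 - v p.2) * kKer N (p.1 - p.2)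

/-- The quadratic form `𝓔_L(u,v)` associated with the logarithmic Laplacian. -/
def bilinEL (N : ℕ) (u v : EucSp N → ℝ) : ℝ :=
  bilinE N u v - cconst N * (∫ p : EucSp N × EucSp N, u p.1 * v p.2 * jKer N (p.1 - p.2))
    + rhoConst N * ∫ x, u x * v x

/-- Membership in the energy space `𝓗(Ω)`. -/
def memH (N : ℕ) (Ω : Set (EucSp N)) (u : EucSp N → ℝ) : Prop :=
  MemLp u 2 volume ∧ (∀ᵐ x ∂volume, x ∉ Ω → u x = 0) ∧
    (∫⁻ p : EucSp N × EucSp N, ENNReal.ofReal ((u p.1 - u p.2) ^ 2 * kKer N (p.1 - p.2))) < ⊤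

/-- The norm `‖u‖ = 𝓔(u,u)^{1/2}` on `𝓗(Ω)`. -/
def normH (N : ℕ) (u : EucSp N → ℝ) : ℝ := Real.sqrt (bilinE N u u)

/-- The squared `L²`-norm `‖u‖₂² = ∫ u²`. -/
def L2sq (N : ℕ) (u : EucSp N → ℝ) : ℝ := ∫ x, (u x) ^ 2

/-- `u` is non-trivial, i.e. not a.e. zero. -/
def Nontriv (N : ℕ) (u : EucSp N → ℝ) : Prop := ¬ (u =ᵐ[volume] fun _ => (0 : ℝ))

/-- `Ω` has Lipschitz boundary: near every boundary point, after choosing a unit direction `v`,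
`Ω` coincides with the region under the graph of a Lipschitz function on the hyperplane
orthogonal to `v`. -/
def HasLipschitzBoundary (N : ℕ) (Ω : Set (EucSp N)) : Prop :=
  ∀ x ∈ frontier Ω, ∃ r > (0 : ℝ), ∃ v : EucSp N, ‖v‖ = 1 ∧
    ∃ (L : NNReal) (f : EucSp N → ℝ), LipschitzWith L f ∧
      ∀ y ∈ Metric.ball x r, (y ∈ Ω ↔ (inner ℝ y v : ℝ) < f (y - (inner ℝ y v : ℝ) • v))

/-- The energy functional `𝔼` associated with the logarithmic problem. -/
def EnFun (N : ℕ) (Ω : Set (EucSp N)) (ω : EucSp N → ℝ) (lam : ℝ) (u : EucSp N → ℝ) : ℝ :=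
  (1 / 2) * bilinEL N u u - (1 / 2) * ∫ x in Ω, ω x * (u x) ^ 2
    - (lam / 4) * ∫ x in Ω, (u x) ^ 2 * (Real.log ((u x) ^ 2) - 1)

/-- Weak solution of `L_Δ u = ω u + λ u ln|u|` in `Ω`, `u = 0` on `ℝ^N \ Ω`. -/
def IsWeakSolLog (N : ℕ) (Ω : Set (EucSp N)) (ω : EucSp N → ℝ) (lam : ℝ)
    (u : EucSp N → ℝ) : Prop :=
  memH N Ω u ∧ ∀ v : EucSp N → ℝ, memH N Ω v →
    bilinEL N u v = ∫ x in Ω, (ω x * u x + lam * u x * Real.log |u x|) * v x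

/-- Membership in the Nehari manifold `N_{0,λ}`. -/
def InNehari (N : ℕ) (Ω : Set (EucSp N)) (ω : EucSp N → ℝ) (lam : ℝ)
    (u : EucSp N → ℝ) : Prop :=
  memH N Ω u ∧ Nontriv N u ∧
    bilinEL N u u = ∫ x in Ω, (ω x + lam * Real.log |u x|) * (u x) ^ 2

/-- A least-energy solution: a weak solution lying on the Nehari manifold which minimises
the energy over the Nehari manifold. -/
def IsLeastEnergyLog (N : ℕ) (Ω : Set (EucSp N)) (ω : EucSp N → ℝ) (lam : ℝ)
    (u : EucSp N → ℝ) : Prop :=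
  IsWeakSolLog N Ω ω lam u ∧ InNehari N Ω ω lam u ∧
    ∀ v : EucSp N → ℝ, InNehari N Ω ω lam v → EnFun N Ω ω lam u ≤ EnFun N Ω ω lam v

/-- The essential supremum of `|g|` on `Ω` (as a real number). -/
def essSupOn (N : ℕ) (Ω : Set (EucSp N)) (g : EucSp N → ℝ) : ℝ :=
  (eLpNormEssSup g (volume.restrict Ω)).toReal

/-- The normalising constant `c_{N,s}` of the fractional Laplacian. -/
def cFrac (N : ℕ) (s : ℝ) : ℝ :=
  (2 : ℝ) ^ (2 * s) * Real.pi ^ (-(N : ℝ) / 2) * s *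
    Real.Gamma (((N : ℝ) + 2 * s) / 2) / Real.Gamma (1 - s)

/-- The bilinear form `𝓔_s(u,v)` of the fractional Laplacian. -/
def bilinEs (N : ℕ) (s : ℝ) (u v : EucSp N → ℝ) : ℝ :=
  (cFrac N s / 2) * ∫ p : EucSp N × EucSp N,
    (u p.1 - u p.2) * (v p.1 - v p.2) * ‖p.1 - p.2‖ ^ (-(N : ℝ) - 2 * s)

/-- Membership in the fractional Sobolev space `H_0^s(Ω)`. -/
def memHs (N : ℕ) (Ω : Set (EucSp N)) (s : ℝ) (u : EucSp N → ℝ) : Prop :=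
  MemLp u 2 volume ∧ (∀ᵐ x ∂volume, x ∉ Ω → u x = 0) ∧
    (∫⁻ p : EucSp N × EucSp N,
      ENNReal.ofReal ((u p.1 - u p.2) ^ 2 * ‖p.1 - p.2‖ ^ (-(N : ℝ) - 2 * s))) < ⊤

/-- The fractional energy functional `E_s`. -/
def EsFun (N : ℕ) (Ω : Set (EucSp N)) (a : ℝ → EucSp N → ℝ) (p : ℝ → ℝ) (s : ℝ)
    (u : EucSp N → ℝ) : ℝ :=
  (1 / 2) * bilinEs N s u u - (1 / p s) * ∫ x in Ω, a s x * |u x| ^ (p s)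

/-- Membership in the fractional Nehari manifold `N_s`. -/
def InNehariS (N : ℕ) (Ω : Set (EucSp N)) (a : ℝ → EucSp N → ℝ) (p : ℝ → ℝ) (s : ℝ)
    (u : EucSp N → ℝ) : Prop :=
  memHs N Ω s u ∧ Nontriv N u ∧ bilinEs N s u u = ∫ x in Ω, a s x * |u x| ^ (p s)

/-- Weak solution of `(-Δ)^s u = a(s,x) |u|^{p(s)-2} u` in `Ω`, `u = 0` on `ℝ^N \ Ω`. -/
def IsWeakSolFrac (N : ℕ) (Ω : Set (EucSp N)) (a : ℝ → EucSp N → ℝ) (p : ℝ → ℝ) (s : ℝ)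
    (u : EucSp N → ℝ) : Prop :=
  memHs N Ω s u ∧ ∀ v : EucSp N → ℝ, memHs N Ω s v →
    bilinEs N s u v = ∫ x in Ω, a s x * |u x| ^ (p s - 2) * u x * v x

/-- Least-energy solution of the fractional problem. -/
def IsLeastEnergyFrac (N : ℕ) (Ω : Set (EucSp N)) (a : ℝ → EucSp N → ℝ) (p : ℝ → ℝ) (s : ℝ)
    (u : EucSp N → ℝ) : Prop :=
  IsWeakSolFrac N Ω a p s u ∧ InNehariS N Ω a p s u ∧
    ∀ v : EucSp N → ℝ, InNehariS N Ω a p s v →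
      EsFun N Ω a p s u ≤ EsFun N Ω a p s v

/-- The `L^q(Ω)`-norm `(∫_Ω |g|^q)^{1/q}`. -/
def LpNormOn (N : ℕ) (Ω : Set (EucSp N)) (g : EucSp N → ℝ) (q : ℝ) : ℝ :=
  (∫ x in Ω, |g x| ^ q) ^ (1 / q)

/-- Assumption (a₀): `a(·,x)` is `C¹` on `[0,1/4]` and `a(0,x) = 1` for a.e. `x ∈ Ω`. -/
def ACond0 (N : ℕ) (Ω : Set (EucSp N)) (a : ℝ → EucSp N → ℝ) : Prop :=
  ∀ᵐ x ∂volume, x ∈ Ω →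
    ContDiffOn ℝ 1 (fun s => a s x) (Set.Icc (0 : ℝ) (1 / 4)) ∧ a 0 x = 1

/-- `a'` is the partial derivative `∂_s a(0,·)` (from the right) for a.e. `x ∈ Ω`. -/
def IsDerA (N : ℕ) (Ω : Set (EucSp N)) (a : ℝ → EucSp N → ℝ) (a' : EucSp N → ℝ) : Prop :=
  ∀ᵐ x ∂volume, x ∈ Ω → HasDerivWithinAt (fun s => a s x) (a' x) (Set.Ici (0 : ℝ)) 0

/-- Assumption (a₂): `∂_s a(0,·) ∈ L^∞(Ω)`. -/
def ACond2 (N : ℕ) (Ω : Set (EucSp N)) (a' : EucSp N → ℝ) : Prop :=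
  ∃ C : ℝ, ∀ᵐ x ∂volume, x ∈ Ω → |a' x| ≤ C

/-- Assumption (a₃): `‖a(s,·)‖_∞^{1/s} ≤ c₃` for all `s ∈ (0,1/4)`. -/
def ACond3 (N : ℕ) (Ω : Set (EucSp N)) (a : ℝ → EucSp N → ℝ) : Prop :=
  ∃ c₃ > (0 : ℝ), ∀ s ∈ Set.Ioo (0 : ℝ) (1 / 4),
    (essSupOn N Ω (a s)) ^ (1 / s) ≤ c₃

/-- Assumption (a₁), relative to the slope `p'(0)` of `p` at `0`. -/
def ACond1 (N : ℕ) (Ω : Set (EucSp N)) (a : ℝ → EucSp N → ℝ) (p : ℝ → ℝ) (p'0 : ℝ) : Prop :=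
  ∃ γ₀ ∈ Set.Ioo (0 : ℝ) (1 - (N : ℝ) * p'0 / 4), ∃ β : ℝ → ℝ,
    (∀ s ∈ Set.Ioo (0 : ℝ) (1 / 4),
      max ((2 * (N : ℝ) / ((N : ℝ) - 2 * s)) / (2 * (N : ℝ) / ((N : ℝ) - 2 * s) - p s))
          (1 + ((N : ℝ) - 2 * s) / (2 * s * ((1 - (N : ℝ) * p'0 / 4) - γ₀))) < β s) ∧
    ∃ c₁ > (0 : ℝ), ∃ c₂ > (0 : ℝ), ∀ s ∈ Set.Ioo (0 : ℝ) (1 / 4),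
      c₁ ≤ (LpNormOn N Ω (a s) (β s)) ^ (1 / (p s - 2)) ∧
        (LpNormOn N Ω (a s) (β s)) ^ (1 / (p s - 2)) ≤ c₂

/-- Smooth compactly supported test functions in `Ω`. -/
def IsTestFun (N : ℕ) (Ω : Set (EucSp N)) (φ : EucSp N → ℝ) : Prop :=
  ContDiff ℝ (⊤ : ℕ∞) φ ∧ HasCompactSupport φ ∧ tsupport φ ⊆ Ω

end
/-- The fractional Sobolev constant `κ_{N,s}`. -/
noncomputable def kappaNs (N : ℕ) (s : ℝ) : ℝ :=
  (2 : ℝ) ^ (-(2 * s)) * Real.pi ^ (-s) *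
    (Real.Gamma (((N : ℝ) - 2 * s) / 2) / Real.Gamma (((N : ℝ) + 2 * s) / 2)) *
    (Real.Gamma (N : ℝ) / Real.Gamma ((N : ℝ) / 2)) ^ (2 * s / (N : ℝ))

/-- The limiting constant `κ_N`. -/
noncomputable def kappaN (N : ℕ) : ℝ :=
  (1 / (4 * Real.pi)) * (Real.Gamma (N : ℝ) / Real.Gamma ((N : ℝ) / 2)) ^ (2 / (N : ℝ)) *
    Real.exp (-2 * digamma ((N : ℝ) / 2))

/-- Lemma 3.9: `lim_{s → 0⁺} κ_{N,s}^{1/s} = κ_N`. -/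
theorem kappa_limit (N : ℕ) (hN : 1 ≤ N) :
    Filter.Tendsto (fun s : ℝ => kappaNs N s ^ (1 / s))
      (nhdsWithin 0 (Set.Ioi 0)) (nhds (kappaN N)) := by
  have hN1 : (1:ℝ) ≤ (N:ℝ) := by exact_mod_cast hN
  set c : ℝ := (N:ℝ)/2 with hc
  have hcpos : 0 < c := by positivity
  have hΓpos : 0 < Real.Gamma c := Real.Gamma_pos_of_pos hcpos
  have hne : ∀ m : ℕ, c ≠ -(m:ℝ) := by
    intro m
    have : (0:ℝ) ≤ m := m.cast_nonneg
    nlinarith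
  have hΓ : HasDerivAt Real.Gamma (deriv Real.Gamma c) c :=
    (Real.differentiableAt_Gamma hne).hasDerivAt
  set φ : ℝ → ℝ := fun s => Real.log (Real.Gamma (c - s)) - Real.log (Real.Gamma (c + s)) with hφdef
  have h1 : HasDerivAt (fun s : ℝ => c - s) (-1) 0 := by
    simpa using (hasDerivAt_id (0:ℝ)).const_sub c
  have h2 : HasDerivAt (fun s : ℝ => c + s) 1 0 := by
    simpa using (hasDerivAt_id (0:ℝ)).const_add c
  have hΓ1 : HasDerivAt Real.Gamma (deriv Real.Gamma c) ((fun s : ℝ => c - s) 0) := by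
    simpa using hΓ
  have hΓ2 : HasDerivAt Real.Gamma (deriv Real.Gamma c) ((fun s : ℝ => c + s) 0) := by
    simpa using hΓ
  have hg1 : HasDerivAt (fun s : ℝ => Real.Gamma (c - s)) (deriv Real.Gamma c * (-1)) 0 :=
    hΓ1.comp 0 h1
  have hg2 : HasDerivAt (fun s : ℝ => Real.Gamma (c + s)) (deriv Real.Gamma c * 1) 0 :=
    hΓ2.comp 0 h2
  have hl1 : HasDerivAt (fun s : ℝ => Real.log (Real.Gamma (c - s)))
      (deriv Real.Gamma c * (-1) / Real.Gamma (c - 0)) 0 := hg1.log (by simpa using hΓpos.ne')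
  have hl2 : HasDerivAt (fun s : ℝ => Real.log (Real.Gamma (c + s)))
      (deriv Real.Gamma c * 1 / Real.Gamma (c + 0)) 0 := hg2.log (by simpa using hΓpos.ne')
  have hφ : HasDerivAt φ (-2 * digamma c) 0 := by
    have := hl1.sub hl2
    simp only [sub_zero, add_zero] at this
    refine this.congr_deriv ?_
    unfold digamma
    ring
  have hslope : Tendsto (slope φ 0) (nhdsWithin 0 (Set.Ioi 0)) (nhds (-2 * digamma c)) :=
    (hasDerivAt_iff_tendsto_slope.mp hφ).mono_left
      (nhdsWithin_mono 0 (fun x hx => ne_of_gt hx))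
  set K : ℝ := (1 / (4 * Real.pi)) * (Real.Gamma (N:ℝ) / Real.Gamma ((N:ℝ)/2)) ^ (2 / (N:ℝ))
    with hK
  have hmain : Tendsto (fun s => K * Real.exp (slope φ 0 s))
      (nhdsWithin 0 (Set.Ioi 0)) (nhds (kappaN N)) := by
    have := ((Real.continuous_exp.tendsto _).comp hslope).const_mul K
    simpa [kappaN, hK, mul_assoc] using this
  refine hmain.congr' ?_
  have hev : ∀ᶠ s in nhdsWithin 0 (Set.Ioi 0), s ∈ Set.Ioo 0 c := by
    filter_upwards [self_mem_nhdsWithin,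
      eventually_nhdsWithin_of_eventually_nhds (eventually_lt_nhds hcpos)] with s hs hs'
    exact ⟨hs, hs'⟩
  filter_upwards [hev] with s hs
  obtain ⟨hs0, hsc⟩ := hs
  have hsne : s ≠ 0 := hs0.ne'
  have hΓm : 0 < Real.Gamma (c - s) := Real.Gamma_pos_of_pos (by linarith)
  have hΓp : 0 < Real.Gamma (c + s) := Real.Gamma_pos_of_pos (by linarith)
  have hrpos : 0 < Real.Gamma (N:ℝ) / Real.Gamma ((N:ℝ)/2) :=
    div_pos (Real.Gamma_pos_of_pos (by linarith)) hΓpos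
  have hslope_eq : slope φ 0 s = φ s / s := by
    have : φ 0 = 0 := by simp [hφdef]
    simp [slope_def_field, this]
  have harg1 : ((N:ℝ) - 2*s)/2 = c - s := by rw [hc]; ring
  have harg2 : ((N:ℝ) + 2*s)/2 = c + s := by rw [hc]; ring
  rw [hslope_eq, kappaNs, harg1, harg2]
  have hπ : (0:ℝ) < Real.pi := Real.pi_pos
  rw [Real.mul_rpow (by positivity) (by positivity),
      Real.mul_rpow (by positivity) (by positivity),
      Real.mul_rpow (by positivity) (by positivity),
      ← Real.rpow_mul (by norm_num : (0:ℝ) ≤ 2),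
      ← Real.rpow_mul hπ.le, ← Real.rpow_mul (le_of_lt hrpos)]
  have e1 : -(2*s) * (1/s) = -2 := by field_simp
  have e2 : -s * (1/s) = -1 := by field_simp
  have e3 : 2 * s / (N:ℝ) * (1/s) = 2 / (N:ℝ) := by
    field_simp
  have e4 : (Real.Gamma (c - s) / Real.Gamma (c + s)) ^ (1/s) = Real.exp (φ s / s) := by
    rw [Real.rpow_def_of_pos (div_pos hΓm hΓp), Real.log_div hΓm.ne' hΓp.ne']
    rw [hφdef]
    ring_nf
  rw [e1, e2, e3, e4]
  have e5 : (2:ℝ) ^ (-2 : ℝ) = 1/4 := by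
    rw [show (-2:ℝ) = ((-2:ℤ):ℝ) by norm_num, Real.rpow_intCast]
    norm_num
  have e6 : Real.pi ^ (-1 : ℝ) = 1/Real.pi := by
    rw [Real.rpow_neg_one]; simp
  rw [e5, e6, hK]
  field_simp
end

section
/- Let N ≥ 1 and let Ω ⊆ ℝ^N be a bounded open set with Lipschitz boundary. Let V₊² = { u : ℝ^N → [0,∞) : u > 0 a.e. in Ω, u = 0 a.e. in ℝ^N \ Ω, and u^{1/2} ∈ 𝓗(Ω) }, and define W : V₊² → ℝ by W(u) = (1/2) 𝓔_L(u^{1/2}, u^{1/2}). Then W is ray-strictly convex: for all v₁, v₂ ∈ V₊² and all t ∈ (0,1), W((1−t)v₁ + t v₂) ≤ (1−t) W(v₁) + t W(v₂), and the inequality is strict unless v₁/v₂ is a.e. equal to a positive constant on Ω. -/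
open MeasureTheory Filter Topology

/-- Membership in the convex cone `V₊² = {u : u > 0 a.e. in Ω, u = 0 outside Ω,
u^{1/2} ∈ 𝓗(Ω)}`. -/
def InVplus (N : ℕ) (Ω : Set (EucSp N)) (u : EucSp N → ℝ) : Prop :=
  (∀ᵐ x ∂MeasureTheory.volume, 0 ≤ u x) ∧
  (∀ᵐ x ∂MeasureTheory.volume, x ∈ Ω → 0 < u x) ∧
  (∀ᵐ x ∂MeasureTheory.volume, x ∉ Ω → u x = 0) ∧
  memH N Ω (fun x => Real.sqrt (u x))

open MeasureTheory in
private lemma sqrt_combo_le {a₁ a₂ b₁ b₂ t : ℝ} (ha₁ : 0 ≤ a₁) (ha₂ : 0 ≤ a₂)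
    (hb₁ : 0 ≤ b₁) (hb₂ : 0 ≤ b₂) (ht0 : 0 ≤ t) (ht1 : t ≤ 1) :
    (1 - t) * (Real.sqrt a₁ * Real.sqrt b₁) + t * (Real.sqrt a₂ * Real.sqrt b₂) ≤
      Real.sqrt ((1 - t) * a₁ + t * a₂) * Real.sqrt ((1 - t) * b₁ + t * b₂) := by
  obtain ⟨s₁, hs₁, rfl⟩ : ∃ s, 0 ≤ s ∧ s ^ 2 = a₁ :=
    ⟨Real.sqrt a₁, Real.sqrt_nonneg _, Real.sq_sqrt ha₁⟩
  obtain ⟨s₂, hs₂, rfl⟩ : ∃ s, 0 ≤ s ∧ s ^ 2 = a₂ :=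
    ⟨Real.sqrt a₂, Real.sqrt_nonneg _, Real.sq_sqrt ha₂⟩
  obtain ⟨s₃, hs₃, rfl⟩ : ∃ s, 0 ≤ s ∧ s ^ 2 = b₁ :=
    ⟨Real.sqrt b₁, Real.sqrt_nonneg _, Real.sq_sqrt hb₁⟩
  obtain ⟨s₄, hs₄, rfl⟩ : ∃ s, 0 ≤ s ∧ s ^ 2 = b₂ :=
    ⟨Real.sqrt b₂, Real.sqrt_nonneg _, Real.sq_sqrt hb₂⟩
  rw [Real.sqrt_sq hs₁, Real.sqrt_sq hs₂, Real.sqrt_sq hs₃, Real.sqrt_sq hs₄]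
  have h1t : (0:ℝ) ≤ 1 - t := by linarith
  have hA : 0 ≤ (1 - t) * s₁ ^ 2 + t * s₂ ^ 2 :=
    add_nonneg (mul_nonneg h1t (sq_nonneg _)) (mul_nonneg ht0 (sq_nonneg _))
  have hL : 0 ≤ (1 - t) * (s₁ * s₃) + t * (s₂ * s₄) :=
    add_nonneg (mul_nonneg h1t (mul_nonneg hs₁ hs₃)) (mul_nonneg ht0 (mul_nonneg hs₂ hs₄))
  have key : ((1 - t) * (s₁ * s₃) + t * (s₂ * s₄)) ^ 2 ≤
      ((1 - t) * s₁ ^ 2 + t * s₂ ^ 2) * ((1 - t) * s₃ ^ 2 + t * s₄ ^ 2) := by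
    nlinarith [mul_nonneg (mul_nonneg (sub_nonneg.2 ht1) ht0) (sq_nonneg (s₁ * s₄ - s₂ * s₃))]
  calc (1 - t) * (s₁ * s₃) + t * (s₂ * s₄)
      = Real.sqrt (((1 - t) * (s₁ * s₃) + t * (s₂ * s₄)) ^ 2) := (Real.sqrt_sq hL).symm
    _ ≤ Real.sqrt (((1 - t) * s₁ ^ 2 + t * s₂ ^ 2) * ((1 - t) * s₃ ^ 2 + t * s₄ ^ 2)) :=
        Real.sqrt_le_sqrt key
    _ = _ := Real.sqrt_mul hA _

private lemma sqrt_combo_eq {a₁ a₂ b₁ b₂ t : ℝ} (ha₁ : 0 ≤ a₁) (ha₂ : 0 ≤ a₂)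
    (hb₁ : 0 ≤ b₁) (hb₂ : 0 ≤ b₂) (ht0 : 0 < t) (ht1 : t < 1)
    (heq : Real.sqrt ((1 - t) * a₁ + t * a₂) * Real.sqrt ((1 - t) * b₁ + t * b₂) =
      (1 - t) * (Real.sqrt a₁ * Real.sqrt b₁) + t * (Real.sqrt a₂ * Real.sqrt b₂)) :
    a₁ * b₂ = a₂ * b₁ := by
  obtain ⟨s₁, hs₁, rfl⟩ : ∃ s, 0 ≤ s ∧ s ^ 2 = a₁ :=
    ⟨Real.sqrt a₁, Real.sqrt_nonneg _, Real.sq_sqrt ha₁⟩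
  obtain ⟨s₂, hs₂, rfl⟩ : ∃ s, 0 ≤ s ∧ s ^ 2 = a₂ :=
    ⟨Real.sqrt a₂, Real.sqrt_nonneg _, Real.sq_sqrt ha₂⟩
  obtain ⟨s₃, hs₃, rfl⟩ : ∃ s, 0 ≤ s ∧ s ^ 2 = b₁ :=
    ⟨Real.sqrt b₁, Real.sqrt_nonneg _, Real.sq_sqrt hb₁⟩
  obtain ⟨s₄, hs₄, rfl⟩ : ∃ s, 0 ≤ s ∧ s ^ 2 = b₂ :=
    ⟨Real.sqrt b₂, Real.sqrt_nonneg _, Real.sq_sqrt hb₂⟩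
  rw [Real.sqrt_sq hs₁, Real.sqrt_sq hs₂, Real.sqrt_sq hs₃, Real.sqrt_sq hs₄] at heq
  have h1t : (0:ℝ) ≤ 1 - t := by linarith
  have hA : 0 ≤ (1 - t) * s₁ ^ 2 + t * s₂ ^ 2 :=
    add_nonneg (mul_nonneg h1t (sq_nonneg _)) (mul_nonneg ht0.le (sq_nonneg _))
  have hB : 0 ≤ (1 - t) * s₃ ^ 2 + t * s₄ ^ 2 :=
    add_nonneg (mul_nonneg h1t (sq_nonneg _)) (mul_nonneg ht0.le (sq_nonneg _))
  have hsq : ((1 - t) * s₁ ^ 2 + t * s₂ ^ 2) * ((1 - t) * s₃ ^ 2 + t * s₄ ^ 2) =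
      ((1 - t) * (s₁ * s₃) + t * (s₂ * s₄)) ^ 2 := by
    rw [← heq, mul_pow, Real.sq_sqrt hA, Real.sq_sqrt hB]
  have hz : s₁ * s₄ - s₂ * s₃ = 0 := by
    have h1 : (1 - t) * t * (s₁ * s₄ - s₂ * s₃) ^ 2 = 0 := by nlinarith [hsq]
    have h2 : (0:ℝ) < (1 - t) * t := by nlinarith
    rcases mul_eq_zero.1 h1 with h | h
    · exact absurd h (ne_of_gt h2)
    · exact pow_eq_zero_iff (two_ne_zero) |>.1 h
  have hz' : s₁ * s₄ = s₂ * s₃ := by linarith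
  calc s₁ ^ 2 * s₄ ^ 2 = (s₁ * s₄) ^ 2 := by ring
    _ = (s₂ * s₃) ^ 2 := by rw [hz']
    _ = s₂ ^ 2 * s₃ ^ 2 := by ring

private lemma kKer_nn (N : ℕ) (z : EucSp N) : 0 ≤ kKer N z := by
  unfold kKer; split
  · positivity
  · exact le_rfl

private lemma jKer_nn (N : ℕ) (z : EucSp N) : 0 ≤ jKer N z := by
  unfold jKer; split
  · positivity
  · exact le_rfl

private lemma jKer_le_one (N : ℕ) (z : EucSp N) : jKer N z ≤ 1 := by
  unfold jKer; split
  · exact Real.rpow_le_one_of_one_le_of_nonpos (by assumption)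
      (neg_nonpos.mpr (Nat.cast_nonneg N))
  · exact zero_le_one

private lemma measurable_kKer (N : ℕ) : Measurable (kKer N) := by
  unfold kKer
  exact Measurable.ite (measurableSet_lt measurable_norm measurable_const)
    (measurable_norm.pow measurable_const) measurable_const

private lemma measurable_jKer (N : ℕ) : Measurable (jKer N) := by
  unfold jKer
  exact Measurable.ite (measurableSet_le measurable_const measurable_norm)
    (measurable_norm.pow measurable_const) measurable_const

private lemma kj_pos (N : ℕ) {z : EucSp N} (hz : z ≠ 0) : 0 < kKer N z + jKer N z := by
  have h0 : (0:ℝ) < ‖z‖ := norm_pos_iff.mpr hz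
  unfold kKer jKer
  rcases lt_or_ge ‖z‖ 1 with h | h
  · rw [if_pos h, if_neg (not_le.mpr h)]
    rw [add_zero]; exact Real.rpow_pos_of_pos h0 _
  · rw [if_neg (not_lt.mpr h), if_pos h]
    rw [zero_add]; exact Real.rpow_pos_of_pos h0 _

private lemma cconst_pos {N : ℕ} (hN : 1 ≤ N) : 0 < cconst N := by
  unfold cconst
  have hN' : (0:ℝ) < (N : ℝ) / 2 := by
    have : (1:ℝ) ≤ (N:ℝ) := by exact_mod_cast hN
    linarith
  exact mul_pos (Real.rpow_pos_of_pos Real.pi_pos _) (Real.Gamma_pos_of_pos hN')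

private lemma nontrivial_eucSp {N : ℕ} (hN : 1 ≤ N) : Nontrivial (EucSp N) := by
  have : 0 < N := hN
  have := Fin.pos_iff_nonempty.mp this
  exact ⟨0, EuclideanSpace.single (Classical.arbitrary (Fin N)) 1, by
    intro h
    have := congrArg (fun f => f (Classical.arbitrary (Fin N))) h
    simp [EuclideanSpace.single] at this⟩

open MeasureTheory in
private lemma diag_null {N : ℕ} (hN : 1 ≤ N) :
    (volume : Measure (EucSp N × EucSp N)) {p | p.1 = p.2} = 0 := by
  haveI : Nontrivial (EucSp N) := nontrivial_eucSp hN
  haveI : NullSingletonClass (volume : Measure (EucSp N)) := by infer_instance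
  have hms : MeasurableSet {p : EucSp N × EucSp N | p.1 = p.2} :=
    measurableSet_eq_fun measurable_fst measurable_snd
  rw [Measure.volume_eq_prod, Measure.prod_apply hms]
  have h : ∀ x : EucSp N, (Prod.mk x ⁻¹' {p : EucSp N × EucSp N | p.1 = p.2}) = {x} := by
    intro x; ext y; simp [eq_comm]
  simp [h]

set_option maxHeartbeats 1000000 in
/-- Proposition 4.3: the functional `W(u) = (1/2) 𝓔_L(u^{1/2}, u^{1/2})` is ray-strictly
convex on the cone `V₊²`: convexity always holds, and equality along a segment forces
`v₁/v₂` to be a.e. a positive constant on `Ω`. -/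
theorem Wfun_ray_strictly_convex
    (N : ℕ) (hN : 1 ≤ N) (Ω : Set (EucSp N)) (hΩo : IsOpen Ω)
    (hΩb : Bornology.IsBounded Ω) (hΩl : HasLipschitzBoundary N Ω) :
    ∀ v₁ v₂ : EucSp N → ℝ, InVplus N Ω v₁ → InVplus N Ω v₂ →
      ∀ t ∈ Set.Ioo (0 : ℝ) 1,
        (1 / 2) * bilinEL N (fun x => Real.sqrt ((1 - t) * v₁ x + t * v₂ x))
            (fun x => Real.sqrt ((1 - t) * v₁ x + t * v₂ x)) ≤
          (1 - t) * ((1 / 2) * bilinEL N (fun x => Real.sqrt (v₁ x))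
              (fun x => Real.sqrt (v₁ x))) +
            t * ((1 / 2) * bilinEL N (fun x => Real.sqrt (v₂ x))
              (fun x => Real.sqrt (v₂ x))) ∧
        ((1 / 2) * bilinEL N (fun x => Real.sqrt ((1 - t) * v₁ x + t * v₂ x))
            (fun x => Real.sqrt ((1 - t) * v₁ x + t * v₂ x)) =
          (1 - t) * ((1 / 2) * bilinEL N (fun x => Real.sqrt (v₁ x))
              (fun x => Real.sqrt (v₁ x))) +
            t * ((1 / 2) * bilinEL N (fun x => Real.sqrt (v₂ x))
              (fun x => Real.sqrt (v₂ x))) →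
          ∃ c > (0 : ℝ), ∀ᵐ x ∂MeasureTheory.volume, x ∈ Ω → v₁ x = c * v₂ x) := by
  intro v₁ v₂ hv₁ hv₂ t ht
  obtain ⟨ht0, ht1⟩ := ht
  have h1t : (0:ℝ) < 1 - t := by linarith
  obtain ⟨h1nn, h1pos, h1zero, h1mem⟩ := hv₁
  obtain ⟨h2nn, h2pos, h2zero, h2mem⟩ := hv₂
  set u₁ : EucSp N → ℝ := fun x => Real.sqrt (v₁ x) with hu₁def
  set u₂ : EucSp N → ℝ := fun x => Real.sqrt (v₂ x) with hu₂def
  set u : EucSp N → ℝ := fun x => Real.sqrt ((1 - t) * v₁ x + t * v₂ x) with hudef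
  obtain ⟨h1L2, h1van, h1fin⟩ := h1mem
  obtain ⟨h2L2, h2van, h2fin⟩ := h2mem
  have hΩfin : volume Ω < ⊤ := hΩb.measure_lt_top
  have hqf : Measure.QuasiMeasurePreserving
      (Prod.fst : EucSp N × EucSp N → EucSp N) volume volume := by
    rw [Measure.volume_eq_prod]; exact Measure.quasiMeasurePreserving_fst
  have hqs : Measure.QuasiMeasurePreserving
      (Prod.snd : EucSp N × EucSp N → EucSp N) volume volume := by
    rw [Measure.volume_eq_prod]; exact Measure.quasiMeasurePreserving_snd
  have hm₁ : AEStronglyMeasurable u₁ volume := h1L2.1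
  have hm₂ : AEStronglyMeasurable u₂ volume := h2L2.1
  have hm : AEStronglyMeasurable u volume := by
    have h' : AEStronglyMeasurable
        (fun x => Real.sqrt ((1 - t) * (u₁ x * u₁ x) + t * (u₂ x * u₂ x))) volume :=
      Real.continuous_sqrt.comp_aestronglyMeasurable
        (((hm₁.mul hm₁).const_mul (1 - t)).add ((hm₂.mul hm₂).const_mul t))
    refine h'.congr ?_
    filter_upwards [h1nn, h2nn] with x hx1 hx2
    simp only [hudef, hu₁def, hu₂def]
    rw [Real.mul_self_sqrt hx1, Real.mul_self_sqrt hx2]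
  have hQ : ∀ᵐ x ∂(volume : Measure (EucSp N)), 0 ≤ v₁ x ∧ 0 ≤ v₂ x ∧
      u₁ x ^ 2 = v₁ x ∧ u₂ x ^ 2 = v₂ x ∧ u x ^ 2 = (1 - t) * v₁ x + t * v₂ x := by
    filter_upwards [h1nn, h2nn] with x h1 h2
    exact ⟨h1, h2, Real.sq_sqrt h1, Real.sq_sqrt h2, Real.sq_sqrt (by nlinarith)⟩
  have hQP : ∀ᵐ p ∂(volume : Measure (EucSp N × EucSp N)),
      (0 ≤ v₁ p.1 ∧ 0 ≤ v₂ p.1 ∧ u₁ p.1 ^ 2 = v₁ p.1 ∧ u₂ p.1 ^ 2 = v₂ p.1 ∧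
        u p.1 ^ 2 = (1 - t) * v₁ p.1 + t * v₂ p.1) ∧
      (0 ≤ v₁ p.2 ∧ 0 ≤ v₂ p.2 ∧ u₁ p.2 ^ 2 = v₁ p.2 ∧ u₂ p.2 ^ 2 = v₂ p.2 ∧
        u p.2 ^ 2 = (1 - t) * v₁ p.2 + t * v₂ p.2) :=
    (hqf.ae hQ).and (hqs.ae hQ)
  set G : EucSp N × EucSp N → ℝ :=
    fun p => u p.1 * u p.2 - ((1 - t) * (u₁ p.1 * u₁ p.2) + t * (u₂ p.1 * u₂ p.2)) with hGdef
  have hGnn : ∀ᵐ p ∂(volume : Measure (EucSp N × EucSp N)), 0 ≤ G p := by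
    filter_upwards [hQP] with p hp
    have h := sqrt_combo_le hp.1.1 hp.1.2.1 hp.2.1 hp.2.2.1 ht0.le ht1.le
    simp only [hGdef, hudef, hu₁def, hu₂def]
    exact sub_nonneg.2 h
  have hGm : AEStronglyMeasurable G volume := by
    refine AEStronglyMeasurable.sub ?_ ?_
    · exact (hm.comp_quasiMeasurePreserving hqf).mul (hm.comp_quasiMeasurePreserving hqs)
    · exact ((((hm₁.comp_quasiMeasurePreserving hqf).mul
          (hm₁.comp_quasiMeasurePreserving hqs)).const_mul (1 - t)).add
        (((hm₂.comp_quasiMeasurePreserving hqf).mul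
          (hm₂.comp_quasiMeasurePreserving hqs)).const_mul t))
  have hKm : Measurable (fun p : EucSp N × EucSp N => kKer N (p.1 - p.2)) :=
    (measurable_kKer N).comp (measurable_fst.sub measurable_snd)
  have hJm : Measurable (fun p : EucSp N × EucSp N => jKer N (p.1 - p.2)) :=
    (measurable_jKer N).comp (measurable_fst.sub measurable_snd)
  have hdm₁ : AEStronglyMeasurable (fun p : EucSp N × EucSp N => u₁ p.1 - u₁ p.2) volume :=
    (hm₁.comp_quasiMeasurePreserving hqf).sub (hm₁.comp_quasiMeasurePreserving hqs)
  have hdm₂ : AEStronglyMeasurable (fun p : EucSp N × EucSp N => u₂ p.1 - u₂ p.2) volume :=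
    (hm₂.comp_quasiMeasurePreserving hqf).sub (hm₂.comp_quasiMeasurePreserving hqs)
  have hdm : AEStronglyMeasurable (fun p : EucSp N × EucSp N => u p.1 - u p.2) volume :=
    (hm.comp_quasiMeasurePreserving hqf).sub (hm.comp_quasiMeasurePreserving hqs)
  have intF₁K : Integrable
      (fun p : EucSp N × EucSp N => (u₁ p.1 - u₁ p.2) ^ 2 * kKer N (p.1 - p.2)) volume := by
    refine ⟨((hdm₁.mul hdm₁).mul hKm.aestronglyMeasurable).congr
      (Filter.Eventually.of_forall fun p => by simp only [Pi.mul_apply]; ring), ?_⟩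
    rw [hasFiniteIntegral_iff_ofReal
      (Filter.Eventually.of_forall fun p => mul_nonneg (sq_nonneg _) (kKer_nn N _))]
    exact h1fin
  have intF₂K : Integrable
      (fun p : EucSp N × EucSp N => (u₂ p.1 - u₂ p.2) ^ 2 * kKer N (p.1 - p.2)) volume := by
    refine ⟨((hdm₂.mul hdm₂).mul hKm.aestronglyMeasurable).congr
      (Filter.Eventually.of_forall fun p => by simp only [Pi.mul_apply]; ring), ?_⟩
    rw [hasFiniteIntegral_iff_ofReal
      (Filter.Eventually.of_forall fun p => mul_nonneg (sq_nonneg _) (kKer_nn N _))]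
    exact h2fin
  have hGKm : AEStronglyMeasurable
      (fun p : EucSp N × EucSp N => G p * kKer N (p.1 - p.2)) volume :=
    hGm.mul hKm.aestronglyMeasurable
  have hidae : ∀ᵐ p ∂(volume : Measure (EucSp N × EucSp N)),
      (u p.1 - u p.2) ^ 2 =
        (1 - t) * (u₁ p.1 - u₁ p.2) ^ 2 + t * (u₂ p.1 - u₂ p.2) ^ 2 - 2 * G p := by
    filter_upwards [hQP] with p hp
    obtain ⟨⟨h11, h12, e11, e21, eu1⟩, ⟨h21, h22, e12, e22, eu2⟩⟩ := hp
    simp only [hGdef]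
    linear_combination eu1 + eu2 - (1 - t) * e11 - (1 - t) * e12 - t * e21 - t * e22
  have intGK : Integrable (fun p : EucSp N × EucSp N => G p * kKer N (p.1 - p.2)) volume := by
    refine Integrable.mono' ((intF₁K.const_mul (1 - t)).add (intF₂K.const_mul t)) hGKm ?_
    filter_upwards [hGnn, hidae] with p hGp hid
    have hK := kKer_nn N (p.1 - p.2)
    rw [Real.norm_of_nonneg (mul_nonneg hGp hK)]
    simp only [Pi.add_apply]
    have key2 : G p ≤ (1 - t) * (u₁ p.1 - u₁ p.2) ^ 2 + t * (u₂ p.1 - u₂ p.2) ^ 2 := by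
      nlinarith [sq_nonneg (u p.1 - u p.2)]
    nlinarith [mul_le_mul_of_nonneg_right key2 hK, mul_nonneg hGp hK]
  have hFKeq : (fun p : EucSp N × EucSp N => (u p.1 - u p.2) ^ 2 * kKer N (p.1 - p.2))
      =ᵐ[volume] fun p =>
        ((1 - t) * ((u₁ p.1 - u₁ p.2) ^ 2 * kKer N (p.1 - p.2)) +
          t * ((u₂ p.1 - u₂ p.2) ^ 2 * kKer N (p.1 - p.2))) -
        2 * (G p * kKer N (p.1 - p.2)) := by
    filter_upwards [hidae] with p hid
    linear_combination kKer N (p.1 - p.2) * hid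
  have intFK : Integrable
      (fun p : EucSp N × EucSp N => (u p.1 - u p.2) ^ 2 * kKer N (p.1 - p.2)) volume :=
    ((((intF₁K.const_mul (1 - t)).add (intF₂K.const_mul t)).sub
      (intGK.const_mul 2)).congr hFKeq.symm)
  have intsum_k : (∫ p : EucSp N × EucSp N, (u p.1 - u p.2) ^ 2 * kKer N (p.1 - p.2)) =
      (1 - t) * (∫ p : EucSp N × EucSp N, (u₁ p.1 - u₁ p.2) ^ 2 * kKer N (p.1 - p.2)) +
      t * (∫ p : EucSp N × EucSp N, (u₂ p.1 - u₂ p.2) ^ 2 * kKer N (p.1 - p.2)) -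
      2 * ∫ p : EucSp N × EucSp N, G p * kKer N (p.1 - p.2) := by
    have intCombo : Integrable (fun p : EucSp N × EucSp N =>
        (1 - t) * ((u₁ p.1 - u₁ p.2) ^ 2 * kKer N (p.1 - p.2)) +
          t * ((u₂ p.1 - u₂ p.2) ^ 2 * kKer N (p.1 - p.2))) volume :=
      (intF₁K.const_mul (1 - t)).add (intF₂K.const_mul t)
    rw [integral_congr_ae hFKeq,
      integral_sub intCombo (intGK.const_mul 2),
      integral_add (intF₁K.const_mul (1 - t)) (intF₂K.const_mul t),
      integral_const_mul, integral_const_mul, integral_const_mul]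
  have hind : Integrable (Ω.indicator (fun _ => (1:ℝ))) volume :=
    (integrable_indicator_iff hΩo.measurableSet).2 (integrableOn_const hΩfin.ne)
  have int_u₁ : Integrable u₁ volume := by
    refine Integrable.mono' (h1L2.integrable_sq.add hind) hm₁ ?_
    filter_upwards [h1van] with x hvan
    simp only [Pi.add_apply]
    by_cases hx : x ∈ Ω
    · rw [Set.indicator_of_mem hx]
      rw [Real.norm_of_nonneg (Real.sqrt_nonneg _)]
      nlinarith [sq_nonneg (u₁ x - 1), Real.sqrt_nonneg (v₁ x)]
    · rw [hvan hx, Set.indicator_of_notMem hx]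
      simp
  have int_u₂ : Integrable u₂ volume := by
    refine Integrable.mono' (h2L2.integrable_sq.add hind) hm₂ ?_
    filter_upwards [h2van] with x hvan
    simp only [Pi.add_apply]
    by_cases hx : x ∈ Ω
    · rw [Set.indicator_of_mem hx]
      rw [Real.norm_of_nonneg (Real.sqrt_nonneg _)]
      nlinarith [sq_nonneg (u₂ x - 1), Real.sqrt_nonneg (v₂ x)]
    · rw [hvan hx, Set.indicator_of_notMem hx]
      simp
  have int_u : Integrable u volume := by
    refine Integrable.mono' (int_u₁.add int_u₂) hm ?_
    filter_upwards [h1nn, h2nn] with x h1 h2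
    simp only [Pi.add_apply, hudef, hu₁def, hu₂def]
    rw [Real.norm_of_nonneg (Real.sqrt_nonneg _)]
    have hsn1 := Real.sqrt_nonneg (v₁ x)
    have hsn2 := Real.sqrt_nonneg (v₂ x)
    have e1 : Real.sqrt (v₁ x) ^ 2 = v₁ x := Real.sq_sqrt h1
    have e2 : Real.sqrt (v₂ x) ^ 2 = v₂ x := Real.sq_sqrt h2
    have h3 : (1 - t) * v₁ x + t * v₂ x ≤ (Real.sqrt (v₁ x) + Real.sqrt (v₂ x)) ^ 2 := by
      nlinarith [mul_nonneg hsn1 hsn2]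
    calc Real.sqrt ((1 - t) * v₁ x + t * v₂ x)
        ≤ Real.sqrt ((Real.sqrt (v₁ x) + Real.sqrt (v₂ x)) ^ 2) := Real.sqrt_le_sqrt h3
      _ = Real.sqrt (v₁ x) + Real.sqrt (v₂ x) := Real.sqrt_sq (by positivity)
  have int_u₁u₁ : Integrable (fun p : EucSp N × EucSp N => u₁ p.1 * u₁ p.2) volume := by
    rw [Measure.volume_eq_prod]; exact int_u₁.mul_prod int_u₁
  have int_u₂u₂ : Integrable (fun p : EucSp N × EucSp N => u₂ p.1 * u₂ p.2) volume := by
    rw [Measure.volume_eq_prod]; exact int_u₂.mul_prod int_u₂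
  have int_uu : Integrable (fun p : EucSp N × EucSp N => u p.1 * u p.2) volume := by
    rw [Measure.volume_eq_prod]; exact int_u.mul_prod int_u
  have hJbd : ∀ᵐ p ∂(volume : Measure (EucSp N × EucSp N)), ‖jKer N (p.1 - p.2)‖ ≤ 1 :=
    Filter.Eventually.of_forall fun p => by
      rw [Real.norm_of_nonneg (jKer_nn N _)]; exact jKer_le_one N _
  have int_u₁u₁J : Integrable
      (fun p : EucSp N × EucSp N => u₁ p.1 * u₁ p.2 * jKer N (p.1 - p.2)) volume :=
    (int_u₁u₁.bdd_mul hJm.aestronglyMeasurable hJbd).congr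
      (Filter.Eventually.of_forall fun p => by ring)
  have int_u₂u₂J : Integrable
      (fun p : EucSp N × EucSp N => u₂ p.1 * u₂ p.2 * jKer N (p.1 - p.2)) volume :=
    (int_u₂u₂.bdd_mul hJm.aestronglyMeasurable hJbd).congr
      (Filter.Eventually.of_forall fun p => by ring)
  have int_uuJ : Integrable
      (fun p : EucSp N × EucSp N => u p.1 * u p.2 * jKer N (p.1 - p.2)) volume :=
    (int_uu.bdd_mul hJm.aestronglyMeasurable hJbd).congr
      (Filter.Eventually.of_forall fun p => by ring)
  have intGJ : Integrable (fun p : EucSp N × EucSp N => G p * jKer N (p.1 - p.2)) volume := by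
    refine Integrable.mono' int_uuJ (hGm.mul hJm.aestronglyMeasurable) ?_
    filter_upwards [hGnn] with p hGp
    have hJ := jKer_nn N (p.1 - p.2)
    rw [Real.norm_of_nonneg (mul_nonneg hGp hJ)]
    refine mul_le_mul_of_nonneg_right ?_ hJ
    simp only [hGdef, hudef, hu₁def, hu₂def]
    have h0 : 0 ≤ (1 - t) * (Real.sqrt (v₁ p.1) * Real.sqrt (v₁ p.2)) +
        t * (Real.sqrt (v₂ p.1) * Real.sqrt (v₂ p.2)) := by
      have := Real.sqrt_nonneg (v₁ p.1)
      have := Real.sqrt_nonneg (v₁ p.2)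
      have := Real.sqrt_nonneg (v₂ p.1)
      have := Real.sqrt_nonneg (v₂ p.2)
      have h1t' : (0:ℝ) ≤ 1 - t := h1t.le
      positivity
    linarith
  have intsum_j : (∫ p : EucSp N × EucSp N, u p.1 * u p.2 * jKer N (p.1 - p.2)) =
      (1 - t) * (∫ p : EucSp N × EucSp N, u₁ p.1 * u₁ p.2 * jKer N (p.1 - p.2)) +
      t * (∫ p : EucSp N × EucSp N, u₂ p.1 * u₂ p.2 * jKer N (p.1 - p.2)) +
      ∫ p : EucSp N × EucSp N, G p * jKer N (p.1 - p.2) := by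
    have heq : (fun p : EucSp N × EucSp N => u p.1 * u p.2 * jKer N (p.1 - p.2)) =
        fun p => ((1 - t) * (u₁ p.1 * u₁ p.2 * jKer N (p.1 - p.2)) +
          t * (u₂ p.1 * u₂ p.2 * jKer N (p.1 - p.2))) + G p * jKer N (p.1 - p.2) := by
      funext p; simp only [hGdef]; ring
    have intComboJ : Integrable (fun p : EucSp N × EucSp N =>
        (1 - t) * (u₁ p.1 * u₁ p.2 * jKer N (p.1 - p.2)) +
          t * (u₂ p.1 * u₂ p.2 * jKer N (p.1 - p.2))) volume :=
      (int_u₁u₁J.const_mul (1 - t)).add (int_u₂u₂J.const_mul t)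
    rw [heq, integral_add intComboJ intGJ,
      integral_add (int_u₁u₁J.const_mul (1 - t)) (int_u₂u₂J.const_mul t),
      integral_const_mul, integral_const_mul]
  have int_sq₁ : Integrable (fun x => u₁ x * u₁ x) volume :=
    h1L2.integrable_sq.congr (Filter.Eventually.of_forall fun x => by ring)
  have int_sq₂ : Integrable (fun x => u₂ x * u₂ x) volume :=
    h2L2.integrable_sq.congr (Filter.Eventually.of_forall fun x => by ring)
  have intsum_2 : (∫ x, u x * u x) =
      (1 - t) * (∫ x, u₁ x * u₁ x) + t * ∫ x, u₂ x * u₂ x := by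
    have heq : (fun x => u x * u x) =ᵐ[volume]
        fun x => (1 - t) * (u₁ x * u₁ x) + t * (u₂ x * u₂ x) := by
      filter_upwards [hQ] with x hx
      obtain ⟨h1, h2, e1, e2, eu⟩ := hx
      linear_combination eu - (1 - t) * e1 - t * e2
    rw [integral_congr_ae heq, integral_add (int_sq₁.const_mul (1 - t)) (int_sq₂.const_mul t),
      integral_const_mul, integral_const_mul]
  set IGK := ∫ p : EucSp N × EucSp N, G p * kKer N (p.1 - p.2) with hIGKdef
  set IGJ := ∫ p : EucSp N × EucSp N, G p * jKer N (p.1 - p.2) with hIGJdef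
  have hIGKnn : 0 ≤ IGK := integral_nonneg_of_ae
    (by filter_upwards [hGnn] with p h; exact mul_nonneg h (kKer_nn N _))
  have hIGJnn : 0 ≤ IGJ := integral_nonneg_of_ae
    (by filter_upwards [hGnn] with p h; exact mul_nonneg h (jKer_nn N _))
  have hc := cconst_pos hN
  have keyE : bilinE N u u = (1 - t) * bilinE N u₁ u₁ + t * bilinE N u₂ u₂
      - cconst N * IGK := by
    unfold bilinE
    have conv : ∀ f : EucSp N → ℝ,
        (∫ p : EucSp N × EucSp N, (f p.1 - f p.2) * (f p.1 - f p.2) * kKer N (p.1 - p.2)) =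
        ∫ p : EucSp N × EucSp N, (f p.1 - f p.2) ^ 2 * kKer N (p.1 - p.2) := fun f =>
      integral_congr_ae (Filter.Eventually.of_forall fun p => by ring)
    rw [conv u, conv u₁, conv u₂, intsum_k]
    ring
  have key : bilinEL N u u = (1 - t) * bilinEL N u₁ u₁ + t * bilinEL N u₂ u₂
      - cconst N * (IGK + IGJ) := by
    unfold bilinEL
    rw [keyE, intsum_j, intsum_2]
    ring
  constructor
  · nlinarith [key, mul_nonneg hc.le (add_nonneg hIGKnn hIGJnn)]
  · intro heq
    have hS : cconst N * (IGK + IGJ) = 0 := by linear_combination key - 2 * heq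
    have hSum : IGK + IGJ = 0 := by
      rcases mul_eq_zero.1 hS with h | h
      · exact absurd h (ne_of_gt hc)
      · exact h
    have hIGK0 : IGK = 0 := le_antisymm (by linarith) hIGKnn
    have hIGJ0 : IGJ = 0 := le_antisymm (by linarith) hIGJnn
    have hGK0 : (fun p : EucSp N × EucSp N => G p * kKer N (p.1 - p.2)) =ᵐ[volume] 0 :=
      (integral_eq_zero_iff_of_nonneg_ae
        (by filter_upwards [hGnn] with p h; exact mul_nonneg h (kKer_nn N _)) intGK).1 hIGK0
    have hGJ0 : (fun p : EucSp N × EucSp N => G p * jKer N (p.1 - p.2)) =ᵐ[volume] 0 :=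
      (integral_eq_zero_iff_of_nonneg_ae
        (by filter_upwards [hGnn] with p h; exact mul_nonneg h (jKer_nn N _)) intGJ).1 hIGJ0
    have hdiag : ∀ᵐ p ∂(volume : Measure (EucSp N × EucSp N)), p.1 ≠ p.2 := by
      rw [ae_iff]
      have : {p : EucSp N × EucSp N | ¬ p.1 ≠ p.2} = {p : EucSp N × EucSp N | p.1 = p.2} := by
        ext p; simp
      rw [this]
      exact diag_null hN
    have hG0 : ∀ᵐ p ∂(volume : Measure (EucSp N × EucSp N)), G p = 0 := by
      filter_upwards [hGK0, hGJ0, hdiag] with p h1 h2 hne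
      have hz : p.1 - p.2 ≠ 0 := sub_ne_zero.2 hne
      have hkj := kj_pos N hz
      have h1' : G p * kKer N (p.1 - p.2) = 0 := h1
      have h2' : G p * jKer N (p.1 - p.2) = 0 := h2
      have hsum : G p * (kKer N (p.1 - p.2) + jKer N (p.1 - p.2)) = 0 := by
        rw [mul_add, h1', h2', add_zero]
      rcases mul_eq_zero.1 hsum with h | h
      · exact h
      · exact absurd h (ne_of_gt hkj)
    have hprop : ∀ᵐ p ∂(volume : Measure (EucSp N × EucSp N)),
        v₁ p.1 * v₂ p.2 = v₂ p.1 * v₁ p.2 := by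
      filter_upwards [hG0, hQP] with p hGp hp
      obtain ⟨⟨h11, h12, e11, e21, eu1⟩, ⟨h21, h22, e12, e22, eu2⟩⟩ := hp
      have hGp' : u p.1 * u p.2 =
          (1 - t) * (u₁ p.1 * u₁ p.2) + t * (u₂ p.1 * u₂ p.2) := by
        simp only [hGdef] at hGp
        linarith
      have heq' : Real.sqrt ((1 - t) * v₁ p.1 + t * v₂ p.1) *
            Real.sqrt ((1 - t) * v₁ p.2 + t * v₂ p.2) =
          (1 - t) * (Real.sqrt (v₁ p.1) * Real.sqrt (v₁ p.2)) +
            t * (Real.sqrt (v₂ p.1) * Real.sqrt (v₂ p.2)) := by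
        simpa only [hudef, hu₁def, hu₂def] using hGp'
      exact sqrt_combo_eq h11 h12 h21 h22 ht0 ht1 heq'
    rw [Measure.volume_eq_prod] at hprop
    have hae2 := Measure.ae_ae_of_ae_prod hprop
    rcases Set.eq_empty_or_nonempty Ω with hΩe | hΩne
    · refine ⟨1, one_pos, ?_⟩
      filter_upwards with x hx
      rw [hΩe] at hx
      exact absurd hx (Set.notMem_empty x)
    · have hΩpos : 0 < volume Ω := hΩo.measure_pos volume hΩne
      have hgood : ∀ᵐ x ∂(volume : Measure (EucSp N)),
          (x ∈ Ω → 0 < v₁ x) ∧ (x ∈ Ω → 0 < v₂ x) ∧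
            (∀ᵐ y ∂(volume : Measure (EucSp N)), v₁ x * v₂ y = v₂ x * v₁ y) :=
        h1pos.and (h2pos.and hae2)
      have hex : ∃ x, x ∈ Ω ∧ ((x ∈ Ω → 0 < v₁ x) ∧ (x ∈ Ω → 0 < v₂ x) ∧
          (∀ᵐ y ∂(volume : Measure (EucSp N)), v₁ x * v₂ y = v₂ x * v₁ y)) := by
        by_contra hcon
        push_neg at hcon
        have hsub : Ω ⊆ {x | ¬ ((x ∈ Ω → 0 < v₁ x) ∧ (x ∈ Ω → 0 < v₂ x) ∧
            (∀ᵐ y ∂(volume : Measure (EucSp N)), v₁ x * v₂ y = v₂ x * v₁ y))} :=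
          fun x hx hP => hcon x hx hP.1 hP.2.1 (hP.2.2.mono fun y hy h => h hy)
        have h0 : volume Ω = 0 := measure_mono_null hsub (ae_iff.1 hgood)
        exact absurd h0 (ne_of_gt hΩpos)
      obtain ⟨x₀, hx₀, hP1, hP2, hPy⟩ := hex
      have hv1 : 0 < v₁ x₀ := hP1 hx₀
      have hv2 : 0 < v₂ x₀ := hP2 hx₀
      refine ⟨v₁ x₀ / v₂ x₀, div_pos hv1 hv2, ?_⟩
      filter_upwards [hPy] with y hy _
      field_simp
      linarith [hy]
end
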